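/- arXiv:2605.22244 — 3 statements merged into one kernel-verified Lean document; each statement's English description precedes it below -/
import Mathlib

section
/- Let f, g : ℂ → ℂ commute, Q a non-constant complex polynomial, and Q(g(z)) = a·Q(f(z)) + b for all z, with |a| = 1 and a ≠ 1. Then I(f) = I(g): |f^n(z)| → ∞ if and only if |g^n(z)| → ∞. -/
/-!
Iterating the relation and using that `f` and `g` commute gives
`Q(gⁿ z) = aⁿ Q(fⁿ z) + b (1 + a + ⋯ + aⁿ⁻¹)`. Since `|a| = 1` and `a ≠ 1`, the geometric sums
`(aⁿ - 1)/(a - 1)` stay bounded, so `|Q(gⁿ z)|` and `|Q(fⁿ z)|` differ by a bounded amount.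
A nonconstant polynomial is a proper map, so `|w n| → ∞` iff `|Q(w n)| → ∞`.
-/

open Filter Finset

theorem Function.Commute.apply_iterate_eq_pow_mul_add_geom_sum {α R : Type*} [CommSemiring R]
    {f g : α → α} (hfg : Function.Commute f g) {P : α → R} {a b : R}
    (hP : ∀ z, P (g z) = a * P (f z) + b) (n : ℕ) (z : α) :
    P (g^[n] z) = a ^ n * P (f^[n] z) + b * ∑ k ∈ range n, a ^ k := by
  induction n generalizing z with
  | zero => simp
  | succ n ih =>
    rw [Function.iterate_succ_apply, ih, (hfg.iterate_left n).eq, hP,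
      Function.iterate_succ_apply', sum_range_succ]
    ring

theorem norm_geom_sum_le {K : Type*} [NormedDivisionRing K] {a : K} (ha : ‖a‖ ≤ 1) (ha1 : a ≠ 1)
    (n : ℕ) : ‖∑ k ∈ range n, a ^ k‖ ≤ 2 / ‖a - 1‖ := by
  rw [geom_sum_eq ha1, norm_div]
  gcongr
  calc ‖a ^ n - 1‖ ≤ ‖a ^ n‖ + ‖(1 : K)‖ := norm_sub_le _ _
    _ ≤ 1 + 1 := by
      rw [norm_pow, norm_one]
      gcongr
      exact pow_le_one₀ (norm_nonneg a) ha
    _ = 2 := one_add_one_eq_two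

theorem tendsto_norm_atTop_iff_of_norm_sub_le {α E : Type*} [SeminormedAddCommGroup E]
    {l : Filter α} {u v : α → E} {C : ℝ} (h : ∀ x, ‖u x - v x‖ ≤ C) :
    Tendsto (‖u ·‖) l atTop ↔ Tendsto (‖v ·‖) l atTop := by
  have key : ∀ {u v : α → E}, (∀ x, ‖u x - v x‖ ≤ C) →
      Tendsto (‖v ·‖) l atTop → Tendsto (‖u ·‖) l atTop := fun {u v} h hv =>
    tendsto_atTop_mono
      (fun x => by linarith [norm_sub_norm_le (v x) (u x), norm_sub_rev (v x) (u x), h x])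
      (tendsto_atTop_add_const_right l (-C) hv)
  exact ⟨key fun x => (norm_sub_rev _ _).trans_le (h x), key h⟩

theorem Polynomial.tendsto_norm_eval_atTop_iff {α R : Type*} [NormedRing R]
    [IsAbsoluteValue (norm : R → ℝ)] [ProperSpace R] (p : Polynomial R) (hp : 0 < p.degree)
    {l : Filter α} {z : α → R} :
    Tendsto (fun x => ‖p.eval (z x)‖) l atTop ↔ Tendsto (fun x => ‖z x‖) l atTop := by
  refine ⟨fun h => ?_, p.tendsto_norm_atTop hp⟩
  rw [tendsto_norm_atTop_iff_cobounded, Metric.cobounded_eq_cocompact] at h ⊢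
  exact (tendsto_comap_iff.mpr h).mono_right (comap_cocompact_le p.continuous)

theorem escaping_eq_poly (f g : ℂ → ℂ) (hcomm : f ∘ g = g ∘ f)
    (Q : Polynomial ℂ) (hQ : 0 < Q.natDegree) (a b : ℂ)
    (ha : ‖a‖ = 1) (ha1 : a ≠ 1)
    (hrel : ∀ z, Q.eval (g z) = a * Q.eval (f z) + b) :
    ∀ z : ℂ,
      Filter.Tendsto (fun n => ‖f^[n] z‖) Filter.atTop Filter.atTop ↔
      Filter.Tendsto (fun n => ‖g^[n] z‖) Filter.atTop Filter.atTop := by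
  intro z
  have hdeg : 0 < Q.degree := Polynomial.natDegree_pos_iff_degree_pos.mp hQ
  have hiter := (Function.Commute.apply_iterate_eq_pow_mul_add_geom_sum
    (P := Q.eval) (fun z => congrFun hcomm z) hrel · z)
  have hclose : ∀ n, ‖Q.eval (g^[n] z) - a ^ n * Q.eval (f^[n] z)‖ ≤ ‖b‖ * (2 / ‖a - 1‖) := by
    intro n
    rw [hiter, add_sub_cancel_left, norm_mul]
    gcongr
    exact norm_geom_sum_le ha.le ha1 n
  rw [← Q.tendsto_norm_eval_atTop_iff hdeg (z := (f^[·] z)),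
    ← Q.tendsto_norm_eval_atTop_iff hdeg (z := (g^[·] z)),
    tendsto_norm_atTop_iff_of_norm_sub_le hclose]
  simp only [norm_mul, norm_pow, ha, one_pow, one_mul]
end

section
/- Let f, g : ℂ → ℂ commute, Q a non-constant complex polynomial, and Q(g(z)) = a·Q(f(z)) + b for all z, with |a| = 1 and a ≠ 1. Then K(f) = K(g): the orbit (f^n(z)) is bounded if and only if the orbit (g^n(z)) is bounded. -/
/-!
Since `a ≠ 1`, the shifted polynomial `P = Q + b / (a - 1)` satisfies `P (g z) = a * P (f z)`,
and commutation of `f` and `g` iterates this to `P (gⁿ z) = aⁿ * P (fⁿ z)`. As `‖a‖ = 1`, the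
`f`- and `g`-orbits of `z` have images under `P` of the same norms, and a non-constant polynomial
maps a set to a bounded set exactly when the set itself is bounded.
-/

open Bornology Polynomial Set

theorem Function.Commute.apply_iterate_eq_pow_mul {α M : Type*} [Monoid M] {f g : α → α}
    (hfg : Function.Commute f g) {φ : α → M} {a : M} (h : ∀ x, φ (g x) = a * φ (f x))
    (n : ℕ) (x : α) : φ (g^[n] x) = a ^ n * φ (f^[n] x) := by
  induction n generalizing x with
  | zero => simp
  | succ n ih =>
    rw [Function.iterate_succ_apply', h, hfg.iterate_right n x, ih, ← Function.iterate_succ_apply,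
      pow_succ', mul_assoc]

theorem Bornology.isBounded_range_iff_of_norm_eq {ι E F : Type*} [SeminormedAddCommGroup E]
    [SeminormedAddCommGroup F] {u : ι → E} {v : ι → F} (h : ∀ i, ‖u i‖ = ‖v i‖) :
    IsBounded (range u) ↔ IsBounded (range v) := by
  simp only [isBounded_iff_forall_norm_le, forall_mem_range, h]

theorem Polynomial.isBounded_image_eval_iff {R : Type*} [NormedRing R]
    [IsAbsoluteValue (norm : R → ℝ)] [ProperSpace R] {p : R[X]} (hp : 0 < p.degree) {s : Set R} :
    IsBounded (p.eval '' s) ↔ IsBounded s := by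
  refine ⟨fun hs ↦ ?_, fun hs ↦ ?_⟩
  · exact ((p.isProperMap_eval hp).isCompact_preimage hs.isCompact_closure).isBounded.subset
      fun x hx ↦ subset_closure (mem_image_of_mem _ hx)
  · exact (hs.isCompact_closure.image p.continuous).isBounded.subset
      (image_mono subset_closure)

theorem filled_julia_eq_poly (f g : ℂ → ℂ) (hcomm : f ∘ g = g ∘ f)
    (Q : Polynomial ℂ) (hQ : 0 < Q.natDegree) (a b : ℂ)
    (ha : ‖a‖ = 1) (ha1 : a ≠ 1)
    (hrel : ∀ z, Q.eval (g z) = a * Q.eval (f z) + b) :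
    ∀ z : ℂ,
      Bornology.IsBounded (Set.range fun n => f^[n] z) ↔
      Bornology.IsBounded (Set.range fun n => g^[n] z) := by
  intro z
  set P := Q + C (b / (a - 1))
  have hQ' : 0 < Q.degree := natDegree_pos_iff_degree_pos.mp hQ
  have hP : 0 < P.degree := by rwa [degree_add_C hQ']
  have hPrel : ∀ w, P.eval (g w) = a * P.eval (f w) := by
    intro w
    have : a - 1 ≠ 0 := sub_ne_zero.mpr ha1
    simp only [P, eval_add, eval_C, hrel]
    field_simp
    ring
  have hfg : Function.Commute f g := (congrFun hcomm ·)
  have hnorm : ∀ n, ‖P.eval (f^[n] z)‖ = ‖P.eval (g^[n] z)‖ := fun n ↦ by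
    rw [hfg.apply_iterate_eq_pow_mul (φ := P.eval) hPrel, norm_mul, norm_pow, ha, one_pow,
      one_mul]
  calc IsBounded (range fun n ↦ f^[n] z)
      ↔ IsBounded (P.eval '' range fun n ↦ f^[n] z) := (isBounded_image_eval_iff hP).symm
    _ ↔ IsBounded (P.eval '' range fun n ↦ g^[n] z) := by
      rw [← range_comp, ← range_comp]
      exact isBounded_range_iff_of_norm_eq hnorm
    _ ↔ IsBounded (range fun n ↦ g^[n] z) := isBounded_image_eval_iff hP
end

section
/- Let f, g : ℂ → ℂ commute, Q a non-constant complex polynomial, and Q(g(z)) = a·Q(f(z)) + b for all z, with |a| = 1 and a ≠ 1. Then BU(f) = BU(g): the orbit of z under f has both a bounded subsequence and a subsequence tending to infinity if and only if the same holds for the orbit under g. -/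
/-!
Iterating the relation gives `Q(gⁿ z) = aⁿ Q(fⁿ z) + b (1 + a + ⋯ + aⁿ⁻¹)`, and since `‖a‖ = 1`,
`a ≠ 1`, the norms `‖Q(fⁿ z)‖` and `‖Q(gⁿ z)‖` differ by at most `2‖b‖ / ‖a - 1‖`. A nonconstant
polynomial is a proper map, so a sequence is bounded, resp. tends to infinity, exactly when its
image under `Q` is; hence both halves of the bungee condition pass between the two orbits.
-/

open Filter Bornology Finset

/-- `BU(φ) = {z | IsBungee (φ^[·] z)}`. -/
def IsBungee {E : Type*} [SeminormedAddGroup E] (u : ℕ → E) : Prop :=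
  (∃ m : ℕ → ℕ, StrictMono m ∧ IsBounded (Set.range fun k => u (m k))) ∧
    ∃ n : ℕ → ℕ, StrictMono n ∧ Tendsto (fun k => ‖u (n k)‖) atTop atTop

theorem Bornology.isBounded_image_iff_of_comap_cobounded_eq {α β : Type*} [Bornology α]
    [Bornology β] {φ : α → β} (hφ : (cobounded β).comap φ = cobounded α) {s : Set α} :
    IsBounded (φ '' s) ↔ IsBounded s := by
  refine ⟨fun h => ?_, fun h => comap_cobounded_le_iff.1 hφ.le h⟩
  rw [isBounded_def, ← hφ]
  exact ⟨_, h.compl, fun x hx hxs => hx ⟨x, hxs, rfl⟩⟩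

theorem Polynomial.comap_eval_cobounded {R : Type*} [NormedField R] [ProperSpace R]
    {Q : Polynomial R} (hQ : 0 < Q.degree) :
    (cobounded R).comap Q.eval = cobounded R := by
  refine le_antisymm ?_ (Tendsto.le_comap ?_)
  · simpa only [Metric.cobounded_eq_cocompact] using Filter.comap_cocompact_le Q.continuous
  · exact tendsto_norm_atTop_iff_cobounded.1 (Q.tendsto_norm_atTop hQ tendsto_norm_cobounded_atTop)

section IsBungee

variable {E F : Type*} [SeminormedAddGroup E] [SeminormedAddGroup F]

theorem isBungee_comp_iff {φ : E → F} (hφ : (cobounded F).comap φ = cobounded E) {u : ℕ → E} :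
    IsBungee (φ ∘ u) ↔ IsBungee u := by
  refine and_congr (exists_congr fun m => and_congr_right fun _ => ?_)
    (exists_congr fun n => and_congr_right fun _ => ?_)
  · exact (Set.range_comp φ _).symm ▸ isBounded_image_iff_of_comap_cobounded_eq hφ
  · rw [tendsto_norm_atTop_iff_cobounded, tendsto_norm_atTop_iff_cobounded, ← hφ,
      tendsto_comap_iff]
    rfl

theorem IsBungee.of_abs_norm_sub_le {u v : ℕ → E} {C : ℝ} (huv : ∀ k, |‖u k‖ - ‖v k‖| ≤ C)
    (hu : IsBungee u) : IsBungee v := by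
  obtain ⟨⟨m, hm, hbdd⟩, n, hn, htends⟩ := hu
  refine ⟨⟨m, hm, ?_⟩, n, hn, ?_⟩
  · obtain ⟨R, hR⟩ := isBounded_iff_forall_norm_le.1 hbdd
    refine isBounded_iff_forall_norm_le.2 ⟨R + C, ?_⟩
    rintro _ ⟨k, rfl⟩
    linarith [hR (u (m k)) ⟨k, rfl⟩, (abs_sub_le_iff.1 (huv (m k))).2]
  · refine tendsto_atTop_mono (fun k => ?_) (tendsto_atTop_add_const_right _ (-C) htends)
    linarith [(abs_sub_le_iff.1 (huv (n k))).1]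

theorem isBungee_iff_of_abs_norm_sub_le {u v : ℕ → E} {C : ℝ}
    (huv : ∀ k, |‖u k‖ - ‖v k‖| ≤ C) : IsBungee u ↔ IsBungee v :=
  ⟨.of_abs_norm_sub_le huv, .of_abs_norm_sub_le fun k => abs_sub_comm (‖u k‖) _ ▸ huv k⟩

end IsBungee

theorem norm_geom_sum_le_of_norm_eq_one {𝕜 : Type*} [NormedField 𝕜] {a : 𝕜} (ha : ‖a‖ = 1)
    (ha1 : a ≠ 1) (n : ℕ) : ‖∑ i ∈ range n, a ^ i‖ ≤ 2 / ‖a - 1‖ := by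
  rw [geom_sum_eq ha1, norm_div]
  gcongr
  calc ‖a ^ n - 1‖ ≤ ‖a ^ n‖ + ‖(1 : 𝕜)‖ := norm_sub_le _ _
    _ = 2 := by rw [norm_pow, ha, one_pow, norm_one]; norm_num

section Iterate

variable {α R : Type*} {f g : α → α} {φ : α → R} {a b : R}

theorem apply_iterate_eq_of_apply_eq_mul_add [CommSemiring R] (hfg : Function.Commute f g)
    (hrel : ∀ z, φ (g z) = a * φ (f z) + b) (n : ℕ) (z : α) :
    φ (g^[n] z) = a ^ n * φ (f^[n] z) + b * ∑ i ∈ range n, a ^ i := by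
  induction n generalizing z with
  | zero => simp
  | succ n ih =>
    rw [Function.iterate_succ_apply', hrel, hfg.iterate_right n z, ih,
      Function.iterate_succ_apply, geom_sum_succ]
    ring

theorem abs_norm_apply_iterate_sub_le [NormedField R] (hfg : Function.Commute f g)
    (hrel : ∀ z, φ (g z) = a * φ (f z) + b) (ha : ‖a‖ = 1) (ha1 : a ≠ 1) (n : ℕ) (z : α) :
    |‖φ (f^[n] z)‖ - ‖φ (g^[n] z)‖| ≤ ‖b‖ * (2 / ‖a - 1‖) := by
  have hnorm : ‖a ^ n * φ (f^[n] z)‖ = ‖φ (f^[n] z)‖ := by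
    rw [norm_mul, norm_pow, ha, one_pow, one_mul]
  calc |‖φ (f^[n] z)‖ - ‖φ (g^[n] z)‖|
      = |‖a ^ n * φ (f^[n] z)‖ - ‖φ (g^[n] z)‖| := by rw [hnorm]
    _ ≤ ‖a ^ n * φ (f^[n] z) - φ (g^[n] z)‖ := abs_norm_sub_norm_le _ _
    _ = ‖b‖ * ‖∑ i ∈ range n, a ^ i‖ := by
      rw [apply_iterate_eq_of_apply_eq_mul_add hfg hrel, sub_add_cancel_left, norm_neg, norm_mul]
    _ ≤ ‖b‖ * (2 / ‖a - 1‖) := by gcongr; exact norm_geom_sum_le_of_norm_eq_one ha ha1 n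

end Iterate

theorem bungee_eq_poly (f g : ℂ → ℂ) (hcomm : f ∘ g = g ∘ f)
    (Q : Polynomial ℂ) (hQ : 0 < Q.natDegree) (a b : ℂ)
    (ha : ‖a‖ = 1) (ha1 : a ≠ 1)
    (hrel : ∀ z, Q.eval (g z) = a * Q.eval (f z) + b) :
    ∀ z : ℂ,
      ((∃ m : ℕ → ℕ, StrictMono m ∧
          Bornology.IsBounded (Set.range fun k => f^[m k] z)) ∧
       (∃ n : ℕ → ℕ, StrictMono n ∧
          Filter.Tendsto (fun k => ‖f^[n k] z‖) Filter.atTop Filter.atTop)) ↔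
      ((∃ m : ℕ → ℕ, StrictMono m ∧
          Bornology.IsBounded (Set.range fun k => g^[m k] z)) ∧
       (∃ n : ℕ → ℕ, StrictMono n ∧
          Filter.Tendsto (fun k => ‖g^[n k] z‖) Filter.atTop Filter.atTop)) := by
  intro z
  have hQ_eval := Q.comap_eval_cobounded (Polynomial.natDegree_pos_iff_degree_pos.1 hQ)
  have hbound (n : ℕ) := abs_norm_apply_iterate_sub_le (f := f) (g := g) (φ := Q.eval)
    (congrFun hcomm) hrel ha ha1 n z
  change IsBungee (f^[·] z) ↔ IsBungee (g^[·] z)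
  exact (isBungee_comp_iff hQ_eval).symm.trans
    ((isBungee_iff_of_abs_norm_sub_le hbound).trans (isBungee_comp_iff hQ_eval))
end
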